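/- arXiv:1308.6330 — 5 statements merged into one kernel-verified Lean document; each statement's English description precedes it below -/
import Mathlib

section
/- Let G be a group acting on an infinite set X which separates X, meaning: for every finite subset Y ⊂ X, the pointwise stabilizer of Y in G does not fix any point outside Y. Then for every finite subset Y ⊂ X, every orbit of the pointwise stabilizer stab_G(Y) on X \ Y is infinite. -/
/-- If a group `G` acting on an infinite set `X` separates `X` (for every finite
`Y ⊂ X` the pointwise stabilizer of `Y` fixes no point outside `Y`), then for
every finite `Y` and every `x ∉ Y` the orbit of `x` under the pointwise
stabilizer of `Y` is infinite. -/
theorem orbits_of_separating_action_infinite {G X : Type*} [Group G] [MulAction G X]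
    [Infinite X]
    (hsep : ∀ Y : Finset X, ∀ x : X, x ∉ Y →
      ∃ g : G, (∀ y ∈ Y, g • y = y) ∧ g • x ≠ x) :
    ∀ Y : Finset X, ∀ x : X, x ∉ Y →
      {z : X | ∃ g : G, (∀ y ∈ Y, g • y = y) ∧ g • x = z}.Infinite := by
  intro Y x hx
  classical
  by_contra hfin
  rw [Set.not_infinite] at hfin
  set S : Set X := {z : X | ∃ g : G, (∀ y ∈ Y, g • y = y) ∧ g • x = z} with hS
  let O : Finset X := hfin.toFinset
  have hO : ∀ z, z ∈ O ↔ z ∈ S := fun z => hfin.mem_toFinset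
  obtain ⟨g, hgY, hgx⟩ := hsep (Y ∪ O.erase x) x (by
    simp only [Finset.mem_union, Finset.mem_erase]
    push_neg
    exact ⟨hx, fun h => absurd rfl h⟩)
  have hgY' : ∀ y ∈ Y, g • y = y := fun y hy => hgY y (Finset.mem_union_left _ hy)
  -- g • x ∈ S
  have hmem : g • x ∈ S := ⟨g, hgY', rfl⟩
  have hmemO : g • x ∈ O.erase x := Finset.mem_erase.mpr ⟨hgx, (hO _).mpr hmem⟩
  have hfix : g • (g • x) = g • x := hgY _ (Finset.mem_union_right _ hmemO)
  exact hgx (smul_left_cancel g hfix)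
end

section
/- Let G be the group of strictly increasing bijections of [0,1]. Suppose h₁, h₂ ∈ G have supports contained in (p₁,q₁) and (p₂,q₂) respectively, where p₁ < q₁ ≤ p₂ < q₂ are points of [0,1]. Then for every g ∈ G, at least one of the commutators [g⁻¹h₁g, h₂] and [g h₁ g⁻¹, h₂] is the identity. -/
open Set

/-- If two order automorphisms have pointwise-disjoint supports, their
commutator is the identity. -/
lemma commutator_eq_one_of_disjoint_supp
    (a b : Icc (0:ℝ) 1 ≃o Icc (0:ℝ) 1)
    (h : ∀ x, a x = x ∨ b x = x) :
    a⁻¹ * b⁻¹ * a * b = 1 := by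
  have key : ∀ x, a (b x) = b (a x) := by
    intro x
    rcases h x with ha | hb
    · rcases h (b x) with ha' | hb'
      · rw [ha', ha]
      · have : b x = x := b.injective hb'
        rw [this, ha, this]
    · rcases h (a x) with ha' | hb'
      · have : a x = x := a.injective ha'
        rw [hb, this, hb]
      · rw [hb, hb']
  have hab : a * b = b * a := by
    ext x
    exact congrArg Subtype.val (key x)
  calc a⁻¹ * b⁻¹ * a * b = a⁻¹ * b⁻¹ * (a * b) := by group
    _ = a⁻¹ * b⁻¹ * (b * a) := by rw [hab]
    _ = 1 := by group

/-- Let `h₁, h₂` be strictly increasing bijections of `[0,1]` (order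
isomorphisms) supported in disjoint open intervals `(p₁,q₁)` and `(p₂,q₂)`
with `(p₁,q₁)` to the left of `(p₂,q₂)`.  Then for any order isomorphism `g`
of `[0,1]`, at least one of the commutators `[g⁻¹ * h₁ * g, h₂]` and
`[g * h₁ * g⁻¹, h₂]` is the identity. -/
theorem law_with_constants_two_intervals
    (p₁ q₁ p₂ q₂ : Icc (0:ℝ) 1)
    (h₁ h₂ : Icc (0:ℝ) 1 ≃o Icc (0:ℝ) 1)
    (hpq₁ : p₁ < q₁) (hq₁p₂ : q₁ ≤ p₂) (hpq₂ : p₂ < q₂)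
    (hs₁ : ∀ x, h₁ x ≠ x → p₁ < x ∧ x < q₁)
    (hs₂ : ∀ x, h₂ x ≠ x → p₂ < x ∧ x < q₂) :
    ∀ g : Icc (0:ℝ) 1 ≃o Icc (0:ℝ) 1,
      (g⁻¹ * h₁ * g)⁻¹ * h₂⁻¹ * (g⁻¹ * h₁ * g) * h₂ = 1 ∨
      (g * h₁ * g⁻¹)⁻¹ * h₂⁻¹ * (g * h₁ * g⁻¹) * h₂ = 1 := by
  intro g
  by_cases hc : q₁ ≤ g p₂
  · -- supp (g⁻¹ h₁ g) ⊆ g⁻¹(p₁,q₁) lies left of p₂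
    left
    apply commutator_eq_one_of_disjoint_supp
    intro x
    by_contra hcon
    push_neg at hcon
    obtain ⟨ha, hb⟩ := hcon
    have hne : h₁ (g x) ≠ g x := by
      intro h
      apply ha
      show g.symm (h₁ (g x)) = x
      rw [h]; exact g.symm_apply_apply x
    have hx1 : g x < q₁ := (hs₁ _ hne).2
    have hx2 : p₂ < x := (hs₂ _ hb).1
    have : g p₂ < g x := g.strictMono hx2
    exact absurd (lt_of_le_of_lt hc this) (not_lt.mpr hx1.le)
  · -- g p₂ < q₁ ≤ p₂, so p₂ < g⁻¹ p₂ and supp (g h₁ g⁻¹) lies left of p₂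
    right
    push_neg at hc
    have hgp : g p₂ < p₂ := lt_of_lt_of_le hc hq₁p₂
    have hgp' : p₂ < g.symm p₂ := by
      have := g.symm.strictMono hgp
      rwa [g.symm_apply_apply] at this
    apply commutator_eq_one_of_disjoint_supp
    intro x
    by_contra hcon
    push_neg at hcon
    obtain ⟨ha, hb⟩ := hcon
    have hne : h₁ (g.symm x) ≠ g.symm x := by
      intro h
      apply ha
      show g (h₁ (g.symm x)) = x
      rw [h]; exact g.apply_symm_apply x
    have hx1 : g.symm x < q₁ := (hs₁ _ hne).2
    have hx2 : p₂ < x := (hs₂ _ hb).1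
    have : g.symm p₂ < g.symm x := g.symm.strictMono hx2
    have : p₂ < g.symm x := lt_trans hgp' this
    exact absurd (lt_trans this hx1) (not_lt.mpr hq₁p₂)
end

section
/- Let G be the group of strictly increasing bijections of [0,1]. Suppose I₁ = (p₁,q₁), I₂ = (p₂,q₂), I₃ = (p₃,q₃), I₄ = (p₄,q₄) are pairwise disjoint open subintervals of [0,1] in increasing order (q₁ ≤ p₂, q₂ ≤ p₃, q₃ ≤ p₄), and hᵢ ∈ G has support contained in Iᵢ for i = 1,2,3,4. Then for every g ∈ G, at least one of the commutators [g⁻¹h₁g, h₄] and [g⁻¹h₂g, h₃] equals the identity. -/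
open Set

/-- If two order isomorphisms have disjoint supports, the commutator is 1. -/
lemma comm_of_disjoint_supp {α : Type*} [Preorder α]
    (a b : α ≃o α) (hab : ∀ x, a x ≠ x → b x = x) (hba : ∀ x, b x ≠ x → a x = x) :
    a⁻¹ * b⁻¹ * a * b = 1 := by
  have hcomm : a * b = b * a := by
    ext x
    show a (b x) = b (a x)
    by_cases hax : a x = x
    · by_cases hbx : b x = x
      · rw [hbx, hax, hbx]
      · have : a (b x) = b x := by
          by_contra h
          exact hbx (b.injective (hab _ h))
        rw [this, hax]
    · have hbx : b x = x := hab x hax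
      have : b (a x) = a x := by
        by_contra h
        have := hba _ h
        exact hax (a.injective this)
      rw [hbx, this]
  calc a⁻¹ * b⁻¹ * a * b = a⁻¹ * (b⁻¹ * (a * b)) := by group
    _ = a⁻¹ * (b⁻¹ * (b * a)) := by rw [hcomm]
    _ = 1 := by group

/-- Let `h₁, h₂, h₃, h₄` be order isomorphisms of `[0,1]` supported in four
pairwise disjoint open intervals in increasing order.  Then for any order
isomorphism `g` of `[0,1]`, at least one of the commutators
`[g⁻¹h₁g, h₄]` and `[g⁻¹h₂g, h₃]` is the identity. -/
theorem law_with_constants_four_intervals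
    (p₁ q₁ p₂ q₂ p₃ q₃ p₄ q₄ : Icc (0:ℝ) 1)
    (h₁ h₂ h₃ h₄ : Icc (0:ℝ) 1 ≃o Icc (0:ℝ) 1)
    (o₁ : p₁ < q₁) (o₂ : q₁ ≤ p₂) (o₃ : p₂ < q₂) (o₄ : q₂ ≤ p₃)
    (o₅ : p₃ < q₃) (o₆ : q₃ ≤ p₄) (o₇ : p₄ < q₄)
    (hs₁ : ∀ x, h₁ x ≠ x → p₁ < x ∧ x < q₁)
    (hs₂ : ∀ x, h₂ x ≠ x → p₂ < x ∧ x < q₂)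
    (hs₃ : ∀ x, h₃ x ≠ x → p₃ < x ∧ x < q₃)
    (hs₄ : ∀ x, h₄ x ≠ x → p₄ < x ∧ x < q₄) :
    ∀ g : Icc (0:ℝ) 1 ≃o Icc (0:ℝ) 1,
      (g⁻¹ * h₁ * g)⁻¹ * h₄⁻¹ * (g⁻¹ * h₁ * g) * h₄ = 1 ∨
      (g⁻¹ * h₂ * g)⁻¹ * h₃⁻¹ * (g⁻¹ * h₂ * g) * h₃ = 1 := by
  intro g
  -- support of the conjugate g⁻¹ * h * g
  have conj_supp : ∀ (h : Icc (0:ℝ) 1 ≃o Icc (0:ℝ) 1) (x),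
      (g⁻¹ * h * g) x ≠ x → h (g x) ≠ g x := by
    intro h x hx hcon
    apply hx
    show g⁻¹ (h (g x)) = x
    rw [hcon]
    simp
  by_cases hcase : g p₄ < q₁
  · -- then g maps everything below q₃ ≤ p₄ below q₁ ≤ p₂, so
    -- supp(g⁻¹h₂g) ∩ supp(h₃) = ∅
    right
    apply comm_of_disjoint_supp
    · intro x hx
      by_contra h3x
      have hgx := hs₂ _ (conj_supp h₂ x hx)
      have h3 := hs₃ _ h3x
      have hxp4 : x < p₄ := lt_of_lt_of_le h3.2 o₆
      have : g x < g p₄ := g.strictMono hxp4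
      have : g x < p₂ := lt_of_lt_of_le (this.trans hcase) o₂
      exact absurd hgx.1 (not_lt.mpr this.le)
    · intro x h3x
      by_contra hx
      have hgx := hs₂ _ (conj_supp h₂ x hx)
      have h3 := hs₃ _ h3x
      have hxp4 : x < p₄ := lt_of_lt_of_le h3.2 o₆
      have : g x < g p₄ := g.strictMono hxp4
      have : g x < p₂ := lt_of_lt_of_le (this.trans hcase) o₂
      exact absurd hgx.1 (not_lt.mpr this.le)
  · -- q₁ ≤ g p₄ : supp(g⁻¹h₁g) ∩ supp(h₄) = ∅
    left
    push_neg at hcase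
    apply comm_of_disjoint_supp
    · intro x hx
      by_contra h4x
      have hgx := hs₁ _ (conj_supp h₁ x hx)
      have h4 := hs₄ _ h4x
      have : g p₄ < g x := g.strictMono h4.1
      exact absurd hgx.2 (not_lt.mpr (hcase.trans this.le))
    · intro x h4x
      by_contra hx
      have hgx := hs₁ _ (conj_supp h₁ x hx)
      have h4 := hs₄ _ h4x
      have : g p₄ < g x := g.strictMono h4.1
      exact absurd hgx.2 (not_lt.mpr (hcase.trans this.le))
end

section
/- If a group G satisfies a law with constants in n variables (a nontrivial reduced word w in the free product F_n * G, containing at least one variable, whose every evaluation in G is trivial), and G admits two elements x, y such that some standard family of words w₁(x,y), ..., w_n(x,y) freely generates a free subgroup of rank n in the free group on x, y, then G satisfies a law with constants in two variables: there is a nontrivial reduced word in F₂ * G (containing at least one variable) all of whose evaluations in G are trivial. -/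
open Monoid

open Function

section WordMap

variable {ι : Type*} {M N : ι → Type*} [∀ i, Group (M i)] [∀ i, Group (N i)]

/-- Map a reduced word letterwise along a family of injective homomorphisms. -/
def wordMap (f : ∀ i, M i →* N i) (hf : ∀ i, Injective (f i)) (w : CoprodI.Word M) :
    CoprodI.Word N where
  toList := w.toList.map fun p => ⟨p.1, f p.1 p.2⟩
  ne_one := by
    intro l hl
    simp only [List.mem_map] at hl
    obtain ⟨p, hp, rfl⟩ := hl
    simp only [ne_eq]
    intro h
    exact w.ne_one p hp ((injective_iff_map_eq_one (f p.1)).mp (hf p.1) _ h)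
  chain_ne := by
    rw [List.isChain_map]
    exact w.chain_ne.imp fun _ _ h => h

theorem prod_wordMap (f : ∀ i, M i →* N i) (hf : ∀ i, Injective (f i)) (w : CoprodI.Word M) :
    (wordMap f hf w).prod =
      CoprodI.lift (fun i => (CoprodI.of (M := N)).comp (f i)) w.prod := by
  simp only [CoprodI.Word.prod, wordMap, List.map_map, map_list_prod]
  congr 1

theorem coprodI_lift_injective (f : ∀ i, M i →* N i) (hf : ∀ i, Injective (f i)) :
    Injective (CoprodI.lift (fun i => (CoprodI.of (M := N)).comp (f i))) := by
  classical
  rw [injective_iff_map_eq_one]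
  intro x hx
  set w := CoprodI.Word.equiv x with hw
  have hxw : x = w.prod := (CoprodI.Word.equiv.left_inv x).symm ▸ rfl
  have hprod : (wordMap f hf w).prod = 1 := by
    rw [prod_wordMap, ← hxw, hx]
  have hinj : Injective (CoprodI.Word.prod (M := N)) :=
    (CoprodI.Word.equiv (M := N)).symm.injective
  have : wordMap f hf w = CoprodI.Word.empty := hinj (by simpa using hprod)
  have hnil : w.toList = [] := by
    have := congrArg CoprodI.Word.toList this
    simpa [wordMap, CoprodI.Word.empty] using this
  have : w = CoprodI.Word.empty := CoprodI.Word.ext hnil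
  rw [hxw, this, CoprodI.Word.prod_empty]

end WordMap

universe u v

section Bridge

variable (A G : Type u) [Group A] [Group G]

instance famGroup : ∀ b : Bool, Group (cond b A G) := fun b =>
  Bool.rec (inferInstance : Group G) (inferInstance : Group A) b

/-- From the binary coproduct to the indexed coproduct over `Bool`. -/
def toI : Coprod A G →* CoprodI (fun b => cond b A G) :=
  Coprod.lift (CoprodI.of (M := fun b => cond b A G) (i := true))
    (CoprodI.of (M := fun b => cond b A G) (i := false))

/-- From the indexed coproduct over `Bool` to the binary coproduct. -/
def ofI : CoprodI (fun b => cond b A G) →* Coprod A G :=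
  CoprodI.lift (fun b => Bool.rec (Coprod.inr : G →* Coprod A G) (Coprod.inl) b)

theorem ofI_comp_toI : (ofI A G).comp (toI A G) = MonoidHom.id _ := by
  apply Coprod.hom_ext <;> ext x <;> (simp only [toI, ofI, MonoidHom.comp_apply, MonoidHom.id_apply, Coprod.lift_apply_inl, Coprod.lift_apply_inr, CoprodI.lift_of, Coprod.map_apply_inl, Coprod.map_apply_inr])

theorem toI_comp_ofI : (toI A G).comp (ofI A G) = MonoidHom.id _ := by
  apply CoprodI.ext_hom
  intro b
  cases b <;> ext x <;> (simp only [toI, ofI, MonoidHom.comp_apply, MonoidHom.id_apply, Coprod.lift_apply_inl, Coprod.lift_apply_inr, CoprodI.lift_of, Coprod.map_apply_inl, Coprod.map_apply_inr])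

theorem toI_injective : Function.Injective (toI A G) := by
  intro x y h
  have := congrArg (ofI A G) h
  simpa [← MonoidHom.comp_apply, ofI_comp_toI] using this

theorem ofI_injective : Function.Injective (ofI A G) := by
  intro x y h
  have := congrArg (toI A G) h
  simpa [← MonoidHom.comp_apply, toI_comp_ofI] using this

end Bridge

theorem coprod_map_injective {A B G : Type u} [Group A] [Group B] [Group G]
    (φ : A →* B) (hφ : Injective φ) :
    Injective (Coprod.map φ (MonoidHom.id G)) := by
  set f : ∀ b : Bool, cond b A G →* cond b B G :=
    fun b => Bool.rec (MonoidHom.id G) φ b with hfdef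
  have hf : ∀ b, Injective (f b) := by
    intro b; cases b
    · exact fun x y h => h
    · exact hφ
  have key : (Coprod.map φ (MonoidHom.id G)) =
      ((ofI B G).comp ((CoprodI.lift fun b => (CoprodI.of).comp (f b)).comp (toI A G))) := by
    apply Coprod.hom_ext <;> ext x <;> (simp only [toI, ofI, MonoidHom.comp_apply, MonoidHom.id_apply, Coprod.lift_apply_inl, Coprod.lift_apply_inr, CoprodI.lift_of, Coprod.map_apply_inl, Coprod.map_apply_inr]; rfl)
  rw [key]
  exact (ofI_injective B G).comp ((coprodI_lift_injective f hf).comp (toI_injective A G))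

theorem coprod_map_equiv_injective {A : Type*} {A' : Type*} {G : Type*} {G' : Type*}
    [Group A] [Group A'] [Group G] [Group G']
    (e : A ≃* A') (e' : G ≃* G') :
    Injective (Coprod.map e.toMonoidHom e'.toMonoidHom) := by
  intro x y h
  have := congrArg (Coprod.map e.symm.toMonoidHom e'.symm.toMonoidHom) h
  rwa [Coprod.map_map, Coprod.map_map,
    (by ext x; simp : e.symm.toMonoidHom.comp e.toMonoidHom = MonoidHom.id A),
    (by ext x; simp : e'.symm.toMonoidHom.comp e'.toMonoidHom = MonoidHom.id G),
    Coprod.map_id_id] at this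

theorem coprod_map_injective' {A B : Type u} {G : Type v} [Group A] [Group B] [Group G]
    (φ : A →* B) (hφ : Injective φ) :
    Injective (Coprod.map φ (MonoidHom.id G)) := by
  set eA : ULift.{max u v} A ≃* A := MulEquiv.ulift
  set eB : ULift.{max u v} B ≃* B := MulEquiv.ulift
  set eG : ULift.{max u v} G ≃* G := MulEquiv.ulift
  set ψ : ULift.{max u v} A →* ULift.{max u v} B :=
    (eB.symm.toMonoidHom.comp φ).comp eA.toMonoidHom with hψ
  have hψinj : Injective ψ := by
    intro x y h
    apply eA.injective.eq_iff.mp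
    exact hφ (by simpa [hψ] using congrArg eB h)
  have key : Coprod.map φ (MonoidHom.id G) =
      (Coprod.map eB.toMonoidHom eG.toMonoidHom).comp
        ((Coprod.map ψ (MonoidHom.id (ULift.{max u v} G))).comp
          (Coprod.map eA.symm.toMonoidHom eG.symm.toMonoidHom)) := by
    apply Coprod.hom_ext <;> ext x <;> simp [hψ]
  rw [key]
  exact (coprod_map_equiv_injective eB eG).comp
    ((coprod_map_injective ψ hψinj).comp (coprod_map_equiv_injective eA.symm eG.symm))


/-- Evaluation of a word with constants: the homomorphism
`FreeGroup (Fin n) ∗ G →* G` sending the `i`-th variable to `g i` and fixing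
the constants from `G`. -/
noncomputable def evalWord {G : Type*} [Group G] {n : ℕ} (g : Fin n → G) :
    Monoid.Coprod (FreeGroup (Fin n)) G →* G :=
  Monoid.Coprod.lift (FreeGroup.lift g) (MonoidHom.id G)

/-- If a group `G` satisfies a law with constants in `n` variables (a
nontrivial word of `Fₙ ∗ G` not lying in `G` whose every evaluation in `G` is
trivial), and the free group of rank `n` embeds into the free group of rank
`2`, then `G` satisfies a law with constants in two variables. -/
theorem law_with_constants_two_variables {G : Type*} [Group G] (n : ℕ)
    (w : Monoid.Coprod (FreeGroup (Fin n)) G)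
    (hw1 : w ≠ 1)
    (hw2 : w ∉ Set.range (Monoid.Coprod.inr : G →* Monoid.Coprod (FreeGroup (Fin n)) G))
    (hlaw : ∀ g : Fin n → G, evalWord g w = 1)
    (hfree : ∃ φ : FreeGroup (Fin n) →* FreeGroup (Fin 2), Function.Injective φ) :
    ∃ w' : Monoid.Coprod (FreeGroup (Fin 2)) G,
      w' ≠ 1 ∧
      w' ∉ Set.range (Monoid.Coprod.inr : G →* Monoid.Coprod (FreeGroup (Fin 2)) G) ∧
      ∀ g : Fin 2 → G, evalWord g w' = 1 := by
  obtain ⟨φ, hφ⟩ := hfree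
  set Φ : Coprod (FreeGroup (Fin n)) G →* Coprod (FreeGroup (Fin 2)) G :=
    Coprod.map φ (MonoidHom.id G) with hΦdef
  have hΦ : Injective Φ := coprod_map_injective' φ hφ
  refine ⟨Φ w, ?_, ?_, ?_⟩
  · intro h
    exact hw1 (hΦ (by simpa using h))
  · rintro ⟨g, hg⟩
    refine hw2 ⟨g, hΦ ?_⟩
    rw [← hg]
    simp [hΦdef, Coprod.map_apply_inr]
  · intro g
    set g' : Fin n → G := fun i => FreeGroup.lift g (φ (FreeGroup.of i)) with hg'
    have hcomp : (evalWord g).comp Φ = evalWord g' := by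
      apply Coprod.hom_ext
      · ext i
        simp [evalWord, hΦdef, hg', Coprod.map_apply_inl, Coprod.lift_apply_inl]
      · ext x
        simp [evalWord, hΦdef, Coprod.map_apply_inr, Coprod.lift_apply_inr]
    have h2 := DFunLike.congr_fun hcomp w
    rw [MonoidHom.comp_apply] at h2
    rw [h2, hlaw]
end

section
/- Let g be a strictly increasing bijection of [0,1] fixing two disjoint closed intervals [a₁,b₁] and [a₂,b₂] pointwise (with b₁ ≤ a₂), and let f₀ be a strictly increasing bijection of [0,1] supported in [a₁,b₂] with f₀(b₁) = a₂. Then the commutator [g, f₀⁻¹ g f₀] = g⁻¹ f₀⁻¹ g⁻¹ f₀ g f₀⁻¹ g f₀ is the identity. -/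
open Set

/-- Let `g` be a strictly increasing bijection (order isomorphism) of `[0,1]`
fixing the disjoint closed intervals `[a₁,b₁]` and `[a₂,b₂]` pointwise, and
let `f₀` be an order isomorphism of `[0,1]` supported in `(a₁,b₂)` with
`f₀ b₁ = a₂`.  Then the commutator `[g, f₀⁻¹ g f₀]` is the identity. -/
theorem commutator_of_conjugate_trivial
    (a₁ b₁ a₂ b₂ : Icc (0:ℝ) 1)
    (hab₁ : a₁ ≤ b₁) (hba : b₁ ≤ a₂) (hab₂ : a₂ ≤ b₂)
    (g f₀ : Icc (0:ℝ) 1 ≃o Icc (0:ℝ) 1)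
    (hg₁ : ∀ t, a₁ ≤ t → t ≤ b₁ → g t = t)
    (hg₂ : ∀ t, a₂ ≤ t → t ≤ b₂ → g t = t)
    (hf₀supp : ∀ t, f₀ t ≠ t → a₁ < t ∧ t < b₂)
    (hf₀b₁ : f₀ b₁ = a₂) :
    g⁻¹ * (f₀⁻¹ * g * f₀)⁻¹ * g * (f₀⁻¹ * g * f₀) = 1 := by
  -- basic fixed points
  have hga₁ : g a₁ = a₁ := hg₁ a₁ le_rfl hab₁
  have hgb₁ : g b₁ = b₁ := hg₁ b₁ hab₁ le_rfl
  have hga₂ : g a₂ = a₂ := hg₂ a₂ le_rfl hab₂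
  have hgb₂ : g b₂ = b₂ := hg₂ b₂ hab₂ le_rfl
  have hflo : ∀ t, t ≤ a₁ → f₀ t = t := by
    intro t ht
    by_contra h
    exact absurd ht (not_le.mpr (hf₀supp t h).1)
  have hfhi : ∀ t, b₂ ≤ t → f₀ t = t := by
    intro t ht
    by_contra h
    exact absurd ht (not_le.mpr (hf₀supp t h).2)
  have hflo' : ∀ t, t ≤ a₁ → f₀.symm t = t := by
    intro t ht
    have := hflo t ht
    conv_lhs => rw [← this]
    exact f₀.symm_apply_apply t
  have hfhi' : ∀ t, b₂ ≤ t → f₀.symm t = t := by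
    intro t ht
    have := hfhi t ht
    conv_lhs => rw [← this]
    exact f₀.symm_apply_apply t
  have hfa₁ : f₀ a₁ = a₁ := hflo a₁ le_rfl
  have hfb₂ : f₀ b₂ = b₂ := hfhi b₂ le_rfl
  have hfsa₂ : f₀.symm a₂ = b₁ := by rw [← hf₀b₁, f₀.symm_apply_apply]
  -- main commutation
  have key : g * (f₀⁻¹ * g * f₀) = (f₀⁻¹ * g * f₀) * g := by
    apply RelIso.ext
    intro t
    show g (f₀.symm (g (f₀ t))) = f₀.symm (g (f₀ (g t)))
    rcases le_total t a₁ with hA | hA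
    · -- region [0, a₁]
      have hgt : g t ≤ a₁ := by rw [← hga₁]; exact g.monotone hA
      have hggt : g (g t) ≤ a₁ := by rw [← hga₁]; exact g.monotone hgt
      rw [hflo t hA, hflo' (g t) hgt, hflo (g t) hgt, hflo' (g (g t)) hggt]
    · rcases le_total t b₁ with hB | hB
      · -- region [a₁, b₁]
        have hgt : g t = t := hg₁ t hA hB
        have h1 : a₁ ≤ f₀ t := by rw [← hfa₁]; exact f₀.monotone hA
        have h2 : f₀ t ≤ a₂ := by rw [← hf₀b₁]; exact f₀.monotone hB
        have h3 : a₁ ≤ g (f₀ t) := by rw [← hga₁]; exact g.monotone h1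
        have h4 : g (f₀ t) ≤ a₂ := by rw [← hga₂]; exact g.monotone h2
        have h5 : a₁ ≤ f₀.symm (g (f₀ t)) := by
          have := f₀.symm.monotone h3
          rwa [show f₀.symm a₁ = a₁ from hflo' a₁ le_rfl] at this
        have h6 : f₀.symm (g (f₀ t)) ≤ b₁ := by
          have := f₀.symm.monotone h4
          rwa [hfsa₂] at this
        rw [hgt, hg₁ _ h5 h6]
      · rcases le_total t b₂ with hC | hC
        · -- region [b₁, b₂]
          have h1 : a₂ ≤ f₀ t := by rw [← hf₀b₁]; exact f₀.monotone hB
          have h2 : f₀ t ≤ b₂ := by rw [← hfb₂]; exact f₀.monotone hC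
          have e1 : g (f₀ t) = f₀ t := hg₂ _ h1 h2
          have hgt1 : b₁ ≤ g t := by rw [← hgb₁]; exact g.monotone hB
          have hgt2 : g t ≤ b₂ := by rw [← hgb₂]; exact g.monotone hC
          have h3 : a₂ ≤ f₀ (g t) := by rw [← hf₀b₁]; exact f₀.monotone hgt1
          have h4 : f₀ (g t) ≤ b₂ := by rw [← hfb₂]; exact f₀.monotone hgt2
          rw [e1, f₀.symm_apply_apply, hg₂ _ h3 h4, f₀.symm_apply_apply]
        · -- region [b₂, 1]
          have hgt : b₂ ≤ g t := by rw [← hgb₂]; exact g.monotone hC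
          have hggt : b₂ ≤ g (g t) := by rw [← hgb₂]; exact g.monotone hgt
          rw [hfhi t hC, hfhi' (g t) hgt, hfhi (g t) hgt, hfhi' (g (g t)) hggt]
  rw [mul_assoc, key, ← mul_assoc]
  group
end
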